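/- For every reduced planar tree t and every n ≥ 2, the number of internal vertices of t having exactly n incoming edges equals the number of edges of cardinality n of the planar rooted hypertree Φ̂(t) (edges counted throughout the hypertree); in particular the total number of internal vertices of t equals the total number of edges of Φ̂(t), and the number of leaves of t equals the number of vertices of Φ̂(t). -/
import Mathlib


/-- Reduced planar trees: the leaf `|`, or `∨(t1,…,tn)` with `n ≥ 2`; the internal
vertex `∨(t1,t2,…,tn)` is encoded as `node t1 t2 [t3,…,tn]`, so that the list of
branches automatically has length at least `2`. -/
inductive R : Type
  | leaf : R
  | node : R → R → List R → R

/-- Planar rooted hypertrees: the single constructor attaches to a root vertex a finite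
ordered (left-to-right) list of edges, each edge being a *nonempty* ordered list of
planar rooted hypertrees; the nonempty list `(t1,…,tm)` of an edge is encoded as the
pair `(t1, [t2,…,tm])`. -/
inductive HT : Type
  | node : List (HT × List HT) → HT

/-- The single-vertex hypertree `•` (a root carrying no edges). -/
def bullet : HT := HT.node []

/-- `β(t1,…,tn)` (for `n ≥ 2`): the hypertree obtained from `tn` by prepending to the
list of edges at the root of `tn` a new leftmost edge given by the list
`(t_{n−1}, t_{n−2}, …, t1)`. -/
def beta (l : List HT) (h : 2 ≤ l.length) : HT :=
  match hr : l.dropLast.reverse with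
  | e :: es' =>
      (match l.getLast (fun hnil => by subst hnil; simp at h) with
       | HT.node es => HT.node ((e, es') :: es))
  | [] => absurd h (by
      have h1 : l.dropLast = [] := by
        have h2 := congrArg List.reverse hr
        simpa using h2
      have h3 : l.dropLast.length = 0 := by rw [h1]; rfl
      rw [List.length_dropLast] at h3
      omega)

mutual
/-- The extension `Φ̂` of Knuth's rotation correspondence to reduced planar trees:
`Φ̂(|) = •` and `Φ̂(∨(t1,…,tn)) = β(Φ̂(t1),…,Φ̂(tn))`. -/
def phiH : R → HT
  | .leaf => bullet
  | .node t1 t2 rest => beta (phiH t1 :: phiH t2 :: phiL rest) (by simp)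

/-- `Φ̂` applied to each tree of a list. -/
def phiL : List R → List HT
  | [] => []
  | u :: us => phiH u :: phiL us
end

mutual
/-- The number of internal vertices of a reduced planar tree with exactly `n`
incoming edges. -/
def countIn (n : ℕ) : R → ℕ
  | .leaf => 0
  | .node t1 t2 rest =>
      (if rest.length + 2 = n then 1 else 0) + countIn n t1 + countIn n t2 + countInL n rest
def countInL (n : ℕ) : List R → ℕ
  | [] => 0
  | u :: us => countIn n u + countInL n us
end

mutual
/-- The total number of internal vertices of a reduced planar tree. -/
def internalR : R → ℕ
  | .leaf => 0
  | .node t1 t2 rest => 1 + internalR t1 + internalR t2 + internalRL rest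
def internalRL : List R → ℕ
  | [] => 0
  | u :: us => internalR u + internalRL us
end

mutual
/-- The number of leaves of a reduced planar tree. -/
def leavesR : R → ℕ
  | .leaf => 1
  | .node t1 t2 rest => leavesR t1 + leavesR t2 + leavesRL rest
def leavesRL : List R → ℕ
  | [] => 0
  | u :: us => leavesR u + leavesRL us
end

mutual
/-- The number of edges of cardinality `n` of a planar rooted hypertree, edges being
counted throughout the hypertree (an edge given by a list of `m` hypertrees has
cardinality `m + 1`). -/
def countEdgesHT (n : ℕ) : HT → ℕ
  | .node es => countEdgesE n es
def countEdgesE (n : ℕ) : List (HT × List HT) → ℕ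
  | [] => 0
  | (t, ts) :: es =>
      (if ts.length + 2 = n then 1 else 0) + countEdgesHT n t + countEdgesL n ts +
        countEdgesE n es
def countEdgesL (n : ℕ) : List HT → ℕ
  | [] => 0
  | t :: ts => countEdgesHT n t + countEdgesL n ts
end

mutual
/-- The total number of edges of a planar rooted hypertree. -/
def edgesHT : HT → ℕ
  | .node es => edgesE es
def edgesE : List (HT × List HT) → ℕ
  | [] => 0
  | (t, ts) :: es => 1 + edgesHT t + edgesL ts + edgesE es
def edgesL : List HT → ℕ
  | [] => 0
  | t :: ts => edgesHT t + edgesL ts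
end

mutual
/-- The number of vertices of a planar rooted hypertree. -/
def vertHT : HT → ℕ
  | .node es => 1 + vertE es
def vertE : List (HT × List HT) → ℕ
  | [] => 0
  | (t, ts) :: es => vertHT t + vertL ts + vertE es
def vertL : List HT → ℕ
  | [] => 0
  | t :: ts => vertHT t + vertL ts
end

theorem countEdgesL_append (n : ℕ) (a b : List HT) :
    countEdgesL n (a ++ b) = countEdgesL n a + countEdgesL n b := by
  induction a with
  | nil => simp [countEdgesL]
  | cons t ts ih => simp [countEdgesL, ih]; omega

theorem countEdgesL_reverse (n : ℕ) (a : List HT) :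
    countEdgesL n a.reverse = countEdgesL n a := by
  induction a with
  | nil => rfl
  | cons t ts ih => simp [countEdgesL, countEdgesL_append, ih]; omega

theorem edgesL_append (a b : List HT) :
    edgesL (a ++ b) = edgesL a + edgesL b := by
  induction a with
  | nil => simp [edgesL]
  | cons t ts ih => simp [edgesL, ih]; omega

theorem edgesL_reverse (a : List HT) : edgesL a.reverse = edgesL a := by
  induction a with
  | nil => rfl
  | cons t ts ih => simp [edgesL, edgesL_append, ih]; omega

theorem vertL_append (a b : List HT) :
    vertL (a ++ b) = vertL a + vertL b := by
  induction a with
  | nil => simp [vertL]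
  | cons t ts ih => simp [vertL, ih]; omega

theorem vertL_reverse (a : List HT) : vertL a.reverse = vertL a := by
  induction a with
  | nil => rfl
  | cons t ts ih => simp [vertL, vertL_append, ih]; omega

theorem beta_counts (l : List HT) (h : 2 ≤ l.length) :
    (∀ n : ℕ, countEdgesHT n (beta l h) =
      (if l.length = n then 1 else 0) + countEdgesL n l) ∧
    edgesHT (beta l h) = 1 + edgesL l ∧
    vertHT (beta l h) = vertL l := by
  have hne : l ≠ [] := by intro hh; subst hh; simp at h
  have hl : l.dropLast ++ [l.getLast hne] = l := List.dropLast_append_getLast hne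
  unfold beta
  split
  case _ e es' hr =>
    have hdl : l.dropLast = (e :: es').reverse := by
      have := congrArg List.reverse hr; simpa using this
    have hlen : es'.length + 2 = l.length := by
      have := congrArg List.length hdl
      simp [List.length_dropLast] at this
      omega
    split
    case _ es heq =>
      have hg : l.getLast hne = HT.node es := by
        convert heq using 2
      constructor
      · intro n
        have hcl : countEdgesL n l
            = countEdgesHT n e + countEdgesL n es' + countEdgesE n es := by
          rw [← hl, countEdgesL_append, hdl, countEdgesL_reverse, hg]
          simp [countEdgesL, countEdgesHT]
        simp [countEdgesHT, countEdgesE, hcl, ← hlen]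
        omega
      constructor
      · have hcl : edgesL l = edgesHT e + edgesL es' + edgesE es := by
          rw [← hl, edgesL_append, hdl, edgesL_reverse, hg]
          simp [edgesL, edgesHT]
        simp [edgesHT, edgesE, hcl]
        omega
      · have hcl : vertL l = vertHT e + vertL es' + (1 + vertE es) := by
          rw [← hl, vertL_append, hdl, vertL_reverse, hg]
          simp [vertL, vertHT]
        simp [vertHT, vertE, hcl]
        omega
  case _ hr =>
    exfalso
    have := congrArg List.length hr
    simp [List.length_dropLast] at this
    omega

theorem phiL_length (ts : List R) : (phiL ts).length = ts.length := by
  induction ts with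
  | nil => rfl
  | cons u us ih => simp [phiL, ih]

mutual
theorem phiH_counts_aux (t : R) :
    (∀ n : ℕ, countIn n t = countEdgesHT n (phiH t)) ∧
    internalR t = edgesHT (phiH t) ∧
    leavesR t = vertHT (phiH t) := by
  cases t with
  | leaf =>
    refine ⟨fun n => ?_, ?_, ?_⟩ <;>
      simp [countIn, internalR, leavesR, phiH, bullet, countEdgesHT, countEdgesE,
        edgesHT, edgesE, vertHT, vertE]
  | node t1 t2 rest =>
    obtain ⟨h1c, h1e, h1v⟩ := phiH_counts_aux t1
    obtain ⟨h2c, h2e, h2v⟩ := phiH_counts_aux t2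
    obtain ⟨hLc, hLe, hLv⟩ := phiL_counts_aux rest
    obtain ⟨bc, be, bv⟩ := beta_counts (phiH t1 :: phiH t2 :: phiL rest) (by simp)
    have hlen : (phiH t1 :: phiH t2 :: phiL rest).length = rest.length + 2 := by
      simp [phiL_length]
    refine ⟨fun n => ?_, ?_, ?_⟩
    · rw [phiH, bc n, hlen, countIn]
      simp [countEdgesL, h1c, h2c, hLc]
      ring
    · rw [phiH, be, internalR]
      simp [edgesL, h1e, h2e, hLe]
      omega
    · rw [phiH, bv, leavesR]
      simp [vertL, h1v, h2v, hLv]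
      omega

theorem phiL_counts_aux (ts : List R) :
    (∀ n : ℕ, countInL n ts = countEdgesL n (phiL ts)) ∧
    internalRL ts = edgesL (phiL ts) ∧
    leavesRL ts = vertL (phiL ts) := by
  cases ts with
  | nil =>
    refine ⟨fun n => ?_, ?_, ?_⟩ <;> simp [countInL, internalRL, leavesRL, phiL,
      countEdgesL, edgesL, vertL]
  | cons u us =>
    obtain ⟨hc, he, hv⟩ := phiH_counts_aux u
    obtain ⟨hc', he', hv'⟩ := phiL_counts_aux us
    refine ⟨fun n => ?_, ?_, ?_⟩ <;>
      simp [countInL, internalRL, leavesRL, phiL, countEdgesL, edgesL, vertL,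
        hc, he, hv, hc', he', hv']
end


/-- for every reduced planar tree `t` and every `n ≥ 2`, the number of
internal vertices of `t` with exactly `n` incoming edges equals the number of edges
of cardinality `n` of `Φ̂(t)`; in particular the total number of internal vertices of
`t` equals the total number of edges of `Φ̂(t)`, and the number of leaves of `t`
equals the number of vertices of `Φ̂(t)`. -/

theorem phiH_counts (t : R) :
    (∀ n : ℕ, 2 ≤ n → countIn n t = countEdgesHT n (phiH t)) ∧
    internalR t = edgesHT (phiH t) ∧
    leavesR t = vertHT (phiH t) := by
  obtain ⟨hc, he, hv⟩ := phiH_counts_aux t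
  exact ⟨fun n _ => hc n, he, hv⟩
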